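/- The squared H₂-norm of the nonlocal transfer function g satisfies (1/(2π))·∫_{−∞}^{∞} |g(iω)|² dω = B/(6D³ + 9BDM), equivalently B²/(6BD³ + 9B²DM). -/

import Mathlib

open MeasureTheory Set Filter Real Topology

noncomputable section

/-- The nonlocal (off-diagonal) transfer function of the symmetric three-GFM
triangle network, from a power disturbance at one GFM's bus to a different GFM's
frequency. -/
def gNonlocal (M D B : ℝ) (s : ℂ) : ℂ :=
  (B : ℂ) / (((M : ℂ) * s ^ 2 + D * s + 3 * B) * ((M : ℂ) * s + D))

namespace H2AuxNonlocal

/-- the quartic denominator -/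
def Qd (M D B ω : ℝ) : ℝ := (M * ω ^ 2 - 3 * B) ^ 2 + D ^ 2 * ω ^ 2

lemma Qd_pos {M D B : ℝ} (hD : 0 < D) (hB : 0 < B) (ω : ℝ) : 0 < Qd M D B ω := by
  rcases eq_or_ne ω 0 with rfl | hω
  · simp [Qd]; positivity
  · have : 0 < D ^ 2 * ω ^ 2 := by positivity
    have : 0 ≤ (M * ω ^ 2 - 3 * B) ^ 2 := sq_nonneg _
    unfold Qd; linarith

lemma abs_g_sq {M D B : ℝ} (hD : 0 < D) (hB : 0 < B) (ω : ℝ) :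
    ‖gNonlocal M D B (ω * Complex.I)‖ ^ 2 =
      B ^ 2 / (Qd M D B ω * (M ^ 2 * ω ^ 2 + D ^ 2)) := by
  have e1 : ((M : ℂ) * ((ω : ℂ) * Complex.I) ^ 2 + D * ((ω : ℂ) * Complex.I) + 3 * B)
      = ((3 * B - M * ω ^ 2 : ℝ) : ℂ) + ((D * ω : ℝ) : ℂ) * Complex.I := by
    rw [mul_pow, Complex.I_sq]; push_cast; ring
  have e2 : ((M : ℂ) * ((ω : ℂ) * Complex.I) + D)
      = ((D : ℝ) : ℂ) + ((M * ω : ℝ) : ℂ) * Complex.I := by push_cast; ring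
  rw [gNonlocal, Complex.sq_norm, e1, e2, map_div₀, map_mul, Complex.normSq_add_mul_I,
    Complex.normSq_add_mul_I, Complex.normSq_ofReal]
  congr 1
  · ring
  · simp only [Qd]; ring



lemma int_p1 {M D : ℝ} (hM : 0 < M) (hD : 0 < D) :
    IntegrableOn (fun ω : ℝ => 1 / (M ^ 2 * ω ^ 2 + D ^ 2)) (Ioi 0) ∧
      ∫ ω : ℝ in Ioi 0, 1 / (M ^ 2 * ω ^ 2 + D ^ 2) = π / (2 * M * D) := by
  have hderiv : ∀ x ∈ Ici (0:ℝ), HasDerivAt (fun ω : ℝ => (1 / (M * D)) * arctan (M * ω / D))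
      (1 / (M ^ 2 * x ^ 2 + D ^ 2)) x := by
    intro x _
    have h1 : HasDerivAt (fun ω : ℝ => M * ω / D) (M / D) x := by
      simpa using ((hasDerivAt_id x).const_mul M).div_const D
    have h2 := ((Real.hasDerivAt_arctan (M * x / D)).comp x h1).const_mul (1 / (M * D))
    refine h2.congr_deriv (Eq.symm ?_)
    have hden : (0:ℝ) < 1 + (M * x / D) ^ 2 := by positivity
    field_simp
    ring
  have htop : Tendsto (fun ω : ℝ => (1 / (M * D)) * arctan (M * ω / D)) atTop
      (𝓝 ((1 / (M * D)) * (π / 2))) := by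
    have hin : Tendsto (fun ω : ℝ => M * ω / D) atTop atTop :=
      (tendsto_id.const_mul_atTop hM).atTop_div_const hD
    exact ((Real.tendsto_arctan_atTop.mono_right nhdsWithin_le_nhds).comp hin).const_mul _
  have hpos : ∀ x ∈ Ioi (0:ℝ), 0 ≤ 1 / (M ^ 2 * x ^ 2 + D ^ 2) := fun x _ => by positivity
  refine ⟨integrableOn_Ioi_deriv_of_nonneg' hderiv hpos htop, ?_⟩
  rw [integral_Ioi_of_hasDerivAt_of_nonneg' hderiv hpos htop]
  simp only [mul_zero, zero_div, Real.arctan_zero, sub_zero]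
  ring

section F2
variable {M D B : ℝ}

/-- extended antiderivative of `(M ω² + 3B)/Q` on `[0,∞)` -/
noncomputable def F2e (M D B : ℝ) (ω : ℝ) : ℝ :=
  if ω = 0 then -(π / (2 * D)) else (1 / D) * arctan ((M * ω - 3 * B * ω⁻¹) / D)

lemma F2e_deriv (hM : 0 < M) (hD : 0 < D) (hB : 0 < B) {x : ℝ} (hx : 0 < x) :
    HasDerivAt (F2e M D B) ((M * x ^ 2 + 3 * B) / Qd M D B x) x := by
  have hraw : HasDerivAt (fun ω : ℝ => (1 / D) * arctan ((M * ω - 3 * B * ω⁻¹) / D))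
      ((M * x ^ 2 + 3 * B) / Qd M D B x) x := by
    have h1 : HasDerivAt (fun ω : ℝ => (M * ω - 3 * B * ω⁻¹) / D)
        ((M - 3 * B * (-(x ^ 2)⁻¹)) / D) x :=
      (((hasDerivAt_id x).const_mul M).sub ((hasDerivAt_inv hx.ne').const_mul (3 * B))).div_const D
        |>.congr_deriv (by ring)
    have h2 := ((Real.hasDerivAt_arctan ((M * x - 3 * B * x⁻¹) / D)).comp x h1).const_mul (1 / D)
    refine h2.congr_deriv (Eq.symm ?_)
    have hden : (0:ℝ) < 1 + ((M * x - 3 * B * x⁻¹) / D) ^ 2 := by positivity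
    have hQ := Qd_pos (M := M) hD hB x
    rw [Qd] at hQ ⊢
    field_simp
    ring
  refine hraw.congr_of_eventuallyEq ?_
  filter_upwards [isOpen_compl_singleton.mem_nhds (by simpa using hx.ne' : x ∈ ({0}ᶜ : Set ℝ))]
    with y hy
  simp only [F2e, if_neg (by simpa using hy)]

lemma F2e_tendsto_top (hM : 0 < M) (hD : 0 < D) (hB : 0 < B) :
    Tendsto (F2e M D B) atTop (𝓝 (π / (2 * D))) := by
  have hin : Tendsto (fun ω : ℝ => (M * ω - 3 * B * ω⁻¹) / D) atTop atTop := by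
    apply tendsto_atTop_mono' _ _ ((tendsto_atTop_add_const_right atTop (-(3 * B))
      (tendsto_id.const_mul_atTop hM)).atTop_div_const hD)
    filter_upwards [eventually_ge_atTop 1] with ω hω
    have h1 : 3 * B * ω⁻¹ ≤ 3 * B := by
      have : ω⁻¹ ≤ 1 := by
        rw [inv_le_one_iff₀]; right; exact hω
      nlinarith
    exact (div_le_div_iff_of_pos_right hD).mpr (by simp only [id_eq]; linarith)
  have h2 := ((Real.tendsto_arctan_atTop.mono_right nhdsWithin_le_nhds).comp hin).const_mul (1 / D)
  have : (1 / D) * (π / 2) = π / (2 * D) := by ring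
  rw [this] at h2
  apply h2.congr'
  filter_upwards [eventually_ne_atTop 0] with ω hω
  simp only [F2e, if_neg hω, Function.comp]

lemma F2e_cont0 (hM : 0 < M) (hD : 0 < D) (hB : 0 < B) :
    ContinuousWithinAt (F2e M D B) (Ici 0) 0 := by
  rw [← continuousWithinAt_diff_self, Ici_sdiff_left]
  have hin : Tendsto (fun ω : ℝ => (M * ω - 3 * B * ω⁻¹) / D) (𝓝[>] 0) atBot := by
    have hb : Tendsto (fun ω : ℝ => (M - 3 * B * ω⁻¹) / D) (𝓝[>] 0) atBot := by
      have h1 : Tendsto (fun ω : ℝ => 3 * B * ω⁻¹) (𝓝[>] (0:ℝ)) atTop :=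
        tendsto_inv_nhdsGT_zero.const_mul_atTop (by positivity)
      have h2 : Tendsto (fun ω : ℝ => M - 3 * B * ω⁻¹) (𝓝[>] (0:ℝ)) atBot := by
        have := tendsto_atBot_add_const_left (𝓝[>] (0:ℝ)) M (tendsto_neg_atTop_atBot.comp h1)
        exact this.congr fun ω => by simp [Function.comp, sub_eq_add_neg]
      exact h2.atBot_div_const hD
    apply tendsto_atBot_mono' _ _ hb
    filter_upwards [Ioc_mem_nhdsGT_of_mem (by constructor <;> norm_num : (0:ℝ) ∈ Ico 0 1)]
      with ω hω
    have : M * ω ≤ M := by nlinarith [hω.1, hω.2]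
    exact (div_le_div_iff_of_pos_right hD).mpr (by linarith)
  have h2 := ((Real.tendsto_arctan_atBot.mono_right nhdsWithin_le_nhds).comp hin).const_mul (1 / D)
  have heq : (1 / D) * (-(π / 2)) = F2e M D B 0 := by simp [F2e]; ring
  rw [heq] at h2
  apply ContinuousWithinAt.mono _ (subset_refl _)
  exact h2.congr' (by
    filter_upwards [self_mem_nhdsWithin] with ω (hω : ω ∈ Ioi 0)
    simp only [F2e, if_neg (ne_of_gt (show (0:ℝ) < ω from hω)), Function.comp])

lemma h2_int (hM : 0 < M) (hD : 0 < D) (hB : 0 < B) :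
    IntegrableOn (fun ω : ℝ => (M * ω ^ 2 + 3 * B) / Qd M D B ω) (Ioi 0) ∧
      ∫ ω : ℝ in Ioi 0, (M * ω ^ 2 + 3 * B) / Qd M D B ω = π / D := by
  have hderiv : ∀ x ∈ Ioi (0:ℝ), HasDerivAt (F2e M D B)
      ((fun ω => (M * ω ^ 2 + 3 * B) / Qd M D B ω) x) x := fun x hx => F2e_deriv hM hD hB hx
  have hpos : ∀ x ∈ Ioi (0:ℝ), 0 ≤ (M * x ^ 2 + 3 * B) / Qd M D B x := fun x hx => by
    have := Qd_pos (M := M) hD hB x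
    have hx' : (0:ℝ) < x := hx
    positivity
  refine ⟨integrableOn_Ioi_deriv_of_nonneg (F2e_cont0 hM hD hB) hderiv hpos
      (F2e_tendsto_top hM hD hB), ?_⟩
  rw [integral_Ioi_of_hasDerivAt_of_nonneg (F2e_cont0 hM hD hB) hderiv hpos
      (F2e_tendsto_top hM hD hB)]
  simp [F2e]
  ring
end F2

lemma denom3_pos {M D B : ℝ} (hM : 0 < M) (hD : 0 < D) (hB : 0 < B) {x : ℝ} (hx : 0 < x) :
    0 < (x + (3 * B / M) * x⁻¹) ^ 2 + (D ^ 2 - 12 * B * M) / M ^ 2 := by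
  have hQ := Qd_pos (M := M) hD hB x
  have hkey : ((x + (3 * B / M) * x⁻¹) ^ 2 + (D ^ 2 - 12 * B * M) / M ^ 2) * (M ^ 2 * x ^ 2)
      = Qd M D B x := by
    rw [Qd]; field_simp; ring
  nlinarith [mul_pos (mul_pos (mul_pos hM hM) hx) hx, sq_nonneg (M * x)]

lemma identity3 {M D B : ℝ} (hM : 0 < M) (hD : 0 < D) (hB : 0 < B) {x : ℝ} (hx : 0 < x) :
    (M * x ^ 2 - 3 * B) / Qd M D B x =
      1 / M * (1 / ((x + (3 * B / M) * x⁻¹) ^ 2 + (D ^ 2 - 12 * B * M) / M ^ 2)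
        * (1 + (3 * B / M) * (-(x ^ 2)⁻¹))) := by
  have hQ := Qd_pos (M := M) hD hB x
  have h1 : 1 + (3 * B / M) * (-(x ^ 2)⁻¹) = (M * x ^ 2 - 3 * B) / (M * x ^ 2) := by
    field_simp; ring
  have h2 : (x + (3 * B / M) * x⁻¹) ^ 2 + (D ^ 2 - 12 * B * M) / M ^ 2
      = Qd M D B x / (M ^ 2 * x ^ 2) := by
    rw [Qd]; field_simp; ring
  rw [h1, h2, one_div (Qd M D B x / (M ^ 2 * x ^ 2)), inv_div]
  field_simp

section F3
variable {M D B : ℝ}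

lemma h3_stuff (hM : 0 < M) (hD : 0 < D) (hB : 0 < B)
    (hint : IntegrableOn (fun ω : ℝ => (M * ω ^ 2 - 3 * B) / Qd M D B ω) (Ioi 0)) :
    ∫ ω : ℝ in Ioi 0, (M * ω ^ 2 - 3 * B) / Qd M D B ω = 0 := by
  set A : ℝ := 3 * B / M with hA_def
  have hA : 0 < A := by positivity
  set c : ℝ := 2 * Real.sqrt A with hc_def
  have hc : 0 < c := by positivity
  have hc2 : c ^ 2 = 4 * A := by
    rw [hc_def, mul_pow, Real.sq_sqrt hA.le]; ring
  set m : ℝ := (D ^ 2 - 12 * B * M) / M ^ 2 with hm_def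
  have hcm : c ^ 2 + m = D ^ 2 / M ^ 2 := by
    rw [hc2, hm_def, hA_def]; field_simp; ring
  have hcmpos : 0 < c ^ 2 + m := by rw [hcm]; positivity
  -- positivity of t^2 + m for t ≥ c
  have key : ∀ t : ℝ, c ≤ t → 0 < t ^ 2 + m := by
    intro t ht
    have : c ^ 2 ≤ t ^ 2 := by nlinarith
    linarith
  set g3 : ℝ → ℝ := fun t => 1 / (t ^ 2 + m) with hg3_def
  have hg3cont : ∀ t : ℝ, c ≤ t → ContinuousAt g3 t := by
    intro t ht
    exact (continuousAt_const.div (by fun_prop) (key t ht).ne')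
  have hg3meas : Measurable g3 := by
    apply Measurable.div measurable_const
    fun_prop
  -- interval integrability
  have hg3ii : ∀ u : ℝ, c ≤ u → IntervalIntegrable g3 volume c u := by
    intro u hu
    apply ContinuousOn.intervalIntegrable
    intro t ht
    rw [uIcc_of_le hu] at ht
    exact (hg3cont t ht.1).continuousWithinAt
  -- integrability of g3 on Ioi c
  have hg3int : IntegrableOn g3 (Ioi c) := by
    set C : ℝ := max 1 (c ^ 2 / (c ^ 2 + m)) with hC_def
    have hC1 : (1:ℝ) ≤ C := le_max_left _ _
    have hbound : ∀ t ∈ Ioi c, ‖g3 t‖ ≤ C * (t ^ (-2 : ℝ)) := by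
      intro t ht
      have htpos : 0 < t := hc.trans ht
      have htm : 0 < t ^ 2 + m := key t (le_of_lt ht)
      have hrw : t ^ (-2 : ℝ) = (t ^ 2)⁻¹ := by
        rw [Real.rpow_neg htpos.le, show ((2:ℝ) = ((2:ℕ):ℝ)) by norm_num, Real.rpow_natCast]
      have hsq : c ^ 2 ≤ t ^ 2 := by nlinarith [le_of_lt (show c < t from ht)]
      have h2 : t ^ 2 ≤ C * (t ^ 2 + m) := by
        rcases le_or_gt 0 m with hm0 | hm0
        · nlinarith
        · have hr : t ^ 2 ≤ c ^ 2 / (c ^ 2 + m) * (t ^ 2 + m) := by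
            rw [div_mul_eq_mul_div, le_div_iff₀ hcmpos]
            nlinarith
          have hr2 : c ^ 2 / (c ^ 2 + m) * (t ^ 2 + m) ≤ C * (t ^ 2 + m) :=
            mul_le_mul_of_nonneg_right (le_max_right _ _) htm.le
          linarith
      rw [hrw, Real.norm_eq_abs, abs_of_pos (by positivity : (0:ℝ) < g3 t), hg3_def]
      rw [show C * (t ^ 2)⁻¹ = C / t ^ 2 from (div_eq_mul_inv C _).symm,
        div_le_div_iff₀ htm (by positivity)]
      nlinarith
    have hbint : IntegrableOn (fun t : ℝ => C * t ^ (-2:ℝ)) (Ioi c) :=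
      (integrableOn_Ioi_rpow_of_lt (by norm_num) hc).const_mul C
    exact Integrable.mono' hbint hg3meas.aestronglyMeasurable.restrict
      ((ae_restrict_iff' measurableSet_Ioi).mpr (ae_of_all _ hbound))
  set G : ℝ → ℝ := fun u => ∫ t in c..u, g3 t with hG_def
  set L : ℝ := ∫ t in Ioi c, g3 t with hL_def
  have hGtop : Tendsto G atTop (𝓝 L) := intervalIntegral_tendsto_integral_Ioi c hg3int tendsto_id
  have hGderiv : ∀ u : ℝ, c ≤ u → HasDerivAt G (g3 u) u := fun u hu =>
    intervalIntegral.integral_hasDerivAt_right (hg3ii u hu)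
      (hg3meas.stronglyMeasurable.stronglyMeasurableAtFilter)
      (hg3cont u hu)
  set v : ℝ → ℝ := fun ω => ω + A * ω⁻¹ with hv_def
  have hvc : ∀ ω : ℝ, 0 < ω → c ≤ v ω := by
    intro ω hω
    have h1 : 0 ≤ ω ^ 2 + A - c * ω := by nlinarith [sq_nonneg (ω - c/2)]
    have h2 : (ω ^ 2 + A - c * ω) / ω = v ω - c := by
      simp only [hv_def]; field_simp
    have h3 := div_nonneg h1 hω.le
    rw [h2] at h3; linarith
  set F3e : ℝ → ℝ := fun ω => if ω = 0 then (1/M) * L else (1/M) * G (v ω) with hF3_def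
  have hF3deriv : ∀ x ∈ Ioi (0:ℝ), HasDerivAt F3e ((M * x ^ 2 - 3 * B) / Qd M D B x) x := by
    intro x hx
    have hx0 : (0:ℝ) < x := hx
    have hv : HasDerivAt v (1 + A * (-(x^2)⁻¹)) x :=
      (hasDerivAt_id x).add ((hasDerivAt_inv hx0.ne').const_mul A)
    have hG := ((hGderiv (v x) (hvc x hx0)).comp x hv).const_mul (1/M)
    simp only [Function.comp_def] at hG
    have heq : F3e =ᶠ[𝓝 x] fun ω => (1/M) * G (v ω) := by
      filter_upwards [isOpen_compl_singleton.mem_nhds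
        (show x ∈ ({0}ᶜ : Set ℝ) by simpa using hx0.ne')] with y hy
      simp only [hF3_def, if_neg (show y ≠ 0 by simpa using hy)]
    refine HasDerivAt.congr_of_eventuallyEq ?_ heq
    refine hG.congr_deriv (Eq.symm ?_)
    simp only [hg3_def, hv_def, hA_def, hm_def]
    exact identity3 hM hD hB hx0
  have hvtop : Tendsto v atTop atTop := by
    apply tendsto_atTop_mono' atTop ?_ tendsto_id
    filter_upwards [eventually_gt_atTop 0] with ω hω
    have : 0 < A * ω⁻¹ := by positivity
    simp only [hv_def, id_eq]; linarith
  have hF3top : Tendsto F3e atTop (𝓝 ((1/M) * L)) := by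
    apply ((hGtop.comp hvtop).const_mul (1/M)).congr'
    filter_upwards [eventually_ne_atTop 0] with ω hω
    simp only [hF3_def, if_neg hω, Function.comp]
  have hF3cont : ContinuousWithinAt F3e (Ici 0) 0 := by
    rw [← continuousWithinAt_diff_self, Ici_sdiff_left]
    have hv0 : Tendsto v (𝓝[>] 0) atTop := by
      apply tendsto_atTop_mono' _ ?_ (tendsto_inv_nhdsGT_zero.const_mul_atTop hA)
      filter_upwards [self_mem_nhdsWithin] with ω (hω : ω ∈ Ioi 0)
      have : (0:ℝ) < ω := hω
      simp only [hv_def]; linarith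
    have hT := (hGtop.comp hv0).const_mul (1/M)
    have h0 : F3e 0 = (1/M) * L := by simp [hF3_def]
    unfold ContinuousWithinAt
    rw [h0]
    apply hT.congr'
    filter_upwards [self_mem_nhdsWithin] with ω (hω : ω ∈ Ioi 0)
    simp only [hF3_def, if_neg (ne_of_gt (show (0:ℝ) < ω from hω)), Function.comp]
  have h0 : F3e 0 = (1/M) * L := by simp [hF3_def]
  rw [integral_Ioi_of_hasDerivAt_of_tendsto hF3cont hF3deriv hint hF3top, h0, sub_self]

end F3

lemma h3_int {M D B : ℝ} (hM : 0 < M) (hD : 0 < D) (hB : 0 < B) :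
    IntegrableOn (fun ω : ℝ => (M * ω ^ 2 - 3 * B) / Qd M D B ω) (Ioi 0) := by
  have h2 := (h2_int hM hD hB).1
  have hQc : Continuous fun ω : ℝ => Qd M D B ω := by unfold Qd; fun_prop
  refine Integrable.mono' h2 ?_ (ae_of_all _ fun ω => ?_)
  · exact (((by fun_prop : Continuous fun ω : ℝ => M * ω ^ 2 - 3 * B).div hQc
      (fun ω => (Qd_pos (M := M) hD hB ω).ne')).aestronglyMeasurable).restrict
  · have hQ := Qd_pos (M := M) hD hB ω
    rw [Real.norm_eq_abs, abs_div, abs_of_pos hQ]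
    exact div_le_div_of_nonneg_right
      (abs_le.mpr ⟨by nlinarith [sq_nonneg ω], by nlinarith [sq_nonneg ω]⟩) hQ.le

lemma partial_fractions {M D B : ℝ} (hM : 0 < M) (hD : 0 < D) (hB : 0 < B) (ω : ℝ) :
    B ^ 2 / (Qd M D B ω * (M ^ 2 * ω ^ 2 + D ^ 2)) =
      (B ^ 2 * M / (6 * B * D ^ 2 + 9 * B ^ 2 * M)) * (1 / (M ^ 2 * ω ^ 2 + D ^ 2))
      + (B ^ 2 / (2 * (6 * B * D ^ 2 + 9 * B ^ 2 * M))) * ((M * ω ^ 2 + 3 * B) / Qd M D B ω)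
      - (3 * B ^ 2 / (2 * (6 * B * D ^ 2 + 9 * B ^ 2 * M))) * ((M * ω ^ 2 - 3 * B) / Qd M D B ω) := by
  have hQ := Qd_pos (M := M) hD hB ω
  have hP : (0:ℝ) < M ^ 2 * ω ^ 2 + D ^ 2 := by positivity
  have hK : (0:ℝ) < 6 * B * D ^ 2 + 9 * B ^ 2 * M := by positivity
  field_simp
  rw [Qd]
  ring

lemma integral_Ioi_value {M D B : ℝ} (hM : 0 < M) (hD : 0 < D) (hB : 0 < B) :
    IntegrableOn (fun ω : ℝ => B ^ 2 / (Qd M D B ω * (M ^ 2 * ω ^ 2 + D ^ 2))) (Ioi 0) ∧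
    ∫ ω : ℝ in Ioi 0, B ^ 2 / (Qd M D B ω * (M ^ 2 * ω ^ 2 + D ^ 2))
      = π * B ^ 2 / ((6 * B * D ^ 2 + 9 * B ^ 2 * M) * D) := by
  have hp1 := int_p1 (M := M) (D := D) hM hD
  have hh2 := h2_int hM hD hB
  have hh3v := h3_stuff hM hD hB (h3_int hM hD hB)
  have hcomb : IntegrableOn (fun ω : ℝ =>
      (B ^ 2 * M / (6 * B * D ^ 2 + 9 * B ^ 2 * M)) * (1 / (M ^ 2 * ω ^ 2 + D ^ 2))
      + (B ^ 2 / (2 * (6 * B * D ^ 2 + 9 * B ^ 2 * M))) * ((M * ω ^ 2 + 3 * B) / Qd M D B ω)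
      - (3 * B ^ 2 / (2 * (6 * B * D ^ 2 + 9 * B ^ 2 * M))) * ((M * ω ^ 2 - 3 * B) / Qd M D B ω))
      (Ioi 0) :=
    ((hp1.1.const_mul _).add (hh2.1.const_mul _)).sub ((h3_int hM hD hB).const_mul _)
  constructor
  · exact hcomb.congr_fun (fun ω _ => (partial_fractions hM hD hB ω).symm) measurableSet_Ioi
  · rw [setIntegral_congr_fun measurableSet_Ioi
      (fun ω _ => partial_fractions hM hD hB ω)]
    have hIa : IntegrableOn (fun ω : ℝ =>
        (B ^ 2 * M / (6 * B * D ^ 2 + 9 * B ^ 2 * M)) * (1 / (M ^ 2 * ω ^ 2 + D ^ 2))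
        + (B ^ 2 / (2 * (6 * B * D ^ 2 + 9 * B ^ 2 * M))) * ((M * ω ^ 2 + 3 * B) / Qd M D B ω))
        (Ioi 0) := (hp1.1.const_mul _).add (hh2.1.const_mul _)
    have hIb : IntegrableOn (fun ω : ℝ =>
        (3 * B ^ 2 / (2 * (6 * B * D ^ 2 + 9 * B ^ 2 * M))) * ((M * ω ^ 2 - 3 * B) / Qd M D B ω))
        (Ioi 0) := (h3_int hM hD hB).const_mul _
    rw [integral_sub hIa hIb, integral_add (hp1.1.const_mul _) (hh2.1.const_mul _),
      integral_const_mul, integral_const_mul, integral_const_mul, hp1.2, hh2.2, hh3v]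
    have hK : (0:ℝ) < 6 * B * D ^ 2 + 9 * B ^ 2 * M := by positivity
    field_simp
    ring

end H2AuxNonlocal

open H2AuxNonlocal in
/-- The squared H₂-norm of the nonlocal transfer function equals B/(6D³ + 9BDM),
equivalently B²/(6BD³ + 9B²DM). -/
theorem nonlocal_H2_norm_sq (M D B : ℝ) (hM : 0 < M) (hD : 0 < D) (hB : 0 < B) :
    (1 / (2 * Real.pi)) *
        (∫ ω : ℝ, ‖gNonlocal M D B (ω * Complex.I)‖ ^ 2) =
        B / (6 * D ^ 3 + 9 * B * D * M) ∧
      (1 / (2 * Real.pi)) *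
        (∫ ω : ℝ, ‖gNonlocal M D B (ω * Complex.I)‖ ^ 2) =
        B ^ 2 / (6 * B * D ^ 3 + 9 * B ^ 2 * D * M) := by
  have hint : (∫ ω : ℝ, ‖gNonlocal M D B (ω * Complex.I)‖ ^ 2)
      = 2 * ∫ ω : ℝ in Ioi 0, B ^ 2 / (Qd M D B ω * (M ^ 2 * ω ^ 2 + D ^ 2)) := by
    have h1 : (fun ω : ℝ => ‖gNonlocal M D B (ω * Complex.I)‖ ^ 2)
        = fun ω : ℝ => B ^ 2 / (Qd M D B ω * (M ^ 2 * ω ^ 2 + D ^ 2)) :=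
      funext fun ω => abs_g_sq hD hB ω
    have h2 : (fun x : ℝ => B ^ 2 / (Qd M D B |x| * (M ^ 2 * |x| ^ 2 + D ^ 2)))
        = fun x : ℝ => B ^ 2 / (Qd M D B x * (M ^ 2 * x ^ 2 + D ^ 2)) :=
      funext fun x => by simp [Qd, sq_abs]
    rw [h1, ← _root_.integral_comp_abs
      (f := fun x : ℝ => B ^ 2 / (Qd M D B x * (M ^ 2 * x ^ 2 + D ^ 2)))]
    exact integral_congr_ae (ae_of_all _ fun x => by simp [Qd, sq_abs])
  rw [hint, (integral_Ioi_value hM hD hB).2]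
  have hK : (0:ℝ) < 6 * B * D ^ 2 + 9 * B ^ 2 * M := by positivity
  have hpi : Real.pi ≠ 0 := Real.pi_ne_zero
  have hd1 : (0:ℝ) < 6 * D ^ 3 + 9 * B * D * M := by positivity
  have hd2 : (0:ℝ) < 6 * B * D ^ 3 + 9 * B ^ 2 * D * M := by positivity
  constructor
  · field_simp
  · field_simp
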